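/- arXiv:2405.10710 — 2 statements merged into one kernel-verified Lean document; each statement's English description precedes it below -/
import Mathlib

section
/- Let q be an even prime power and F = GF(q). Let y = (y0,...,y5) ∈ F^6 be nonzero with y0 = y3 = y5 = 0 (such y automatically has rank(M_y) = 2 and corresponds to a point of the nucleus plane). Then among the conics of the squab S_y there are exactly q^2+q+1 double lines, exactly (q^3+2q^2+q)/2 pairs of real lines, exactly (q^3−q)/2 pairs of imaginary lines, and exactly q^4−q^2 nonsingular conics. -/
open Matrix

namespace Conics

/-- Coefficient vector (a0,...,a5) of the product of two linear forms
`(b0*X0+b1*X1+b2*X2)*(c0*X0+c1*X1+c2*X2)`, where the quadratic form with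
coefficient vector `a` is `a0*X0^2 + a1*X0*X1 + a2*X0*X2 + a3*X1^2 + a4*X1*X2 + a5*X2^2`. -/
def mulLin {F : Type} [Field F] (b c : Fin 3 → F) : Fin 6 → F :=
  ![b 0 * c 0, b 0 * c 1 + b 1 * c 0, b 0 * c 2 + b 2 * c 0,
    b 1 * c 1, b 1 * c 2 + b 2 * c 1, b 2 * c 2]

/-- The discriminant of the quadratic form with coefficient vector `a`. -/
def disc {F : Type} [Field F] (a : Fin 6 → F) : F :=
  4 * a 0 * a 3 * a 5 + a 1 * a 2 * a 4 - a 0 * a 4 ^ 2 - a 3 * a 2 ^ 2 - a 5 * a 1 ^ 2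

/-- `f_a` is a double line: `f_a = c * l^2` for a nonzero scalar `c` and nonzero linear form `l`. -/
def IsDoubleLine {F : Type} [Field F] (a : Fin 6 → F) : Prop :=
  ∃ (c : F) (l : Fin 3 → F), c ≠ 0 ∧ l ≠ 0 ∧ a = c • mulLin l l

/-- `f_a` is a pair of (distinct) real lines: `f_a = l1 * l2` with neither linear form a scalar
multiple of the other. -/
def IsRealPair {F : Type} [Field F] (a : Fin 6 → F) : Prop :=
  ∃ l1 l2 : Fin 3 → F, (¬ ∃ t : F, l2 = t • l1) ∧ (¬ ∃ t : F, l1 = t • l2) ∧ a = mulLin l1 l2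

/-- `f_a` is a pair of conjugate imaginary lines: singular, but not a product of two linear
forms over `F`. -/
def IsImagPair {F : Type} [Field F] (a : Fin 6 → F) : Prop :=
  disc a = 0 ∧ ¬ ∃ l1 l2 : Fin 3 → F, a = mulLin l1 l2

/-- `f_a` is a nonsingular conic. -/
def IsNonsingular {F : Type} [Field F] (a : Fin 6 → F) : Prop :=
  disc a ≠ 0

/-- The number of conics of a given type `T` in a linear system `W` (a subspace of the space of
quadratic forms, identified with `F^6`): the number of 1-dimensional subspaces `⟨a⟩` of `W`,
`a ≠ 0`, such that `f_a` has type `T`. -/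
noncomputable def numConics {F : Type} [Field F] (W : Submodule F (Fin 6 → F))
    (T : (Fin 6 → F) → Prop) : ℕ :=
  Set.ncard {P : Submodule F (Fin 6 → F) |
    ∃ a : Fin 6 → F, a ≠ 0 ∧ a ∈ W ∧ T a ∧ P = Submodule.span F {a}}

/-- The symmetric 3×3 matrix associated with a point `y` of `PG(5,q)`. -/
def M {F : Type} [Field F] (y : Fin 6 → F) : Matrix (Fin 3) (Fin 3) F :=
  !![y 0, y 1, y 2; y 1, y 3, y 4; y 2, y 4, y 5]

/-- The pairing `B(a,y) = a0*y0 + ... + a5*y5`. -/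
def Bform {F : Type} [Field F] (a y : Fin 6 → F) : F :=
  a 0 * y 0 + a 1 * y 1 + a 2 * y 2 + a 3 * y 3 + a 4 * y 4 + a 5 * y 5

/-- The squab of conics associated with a (nonzero) point `y`: the hyperplane
`{a : B(a,y) = 0}` of the space of quadratic forms. -/
def squab {F : Type} [Field F] (y : Fin 6 → F) : Submodule F (Fin 6 → F) where
  carrier := {a | Bform a y = 0}
  add_mem' := by
    intro a b ha hb
    simp only [Set.mem_setOf_eq, Bform, Pi.add_apply] at *
    linear_combination ha + hb
  zero_mem' := by simp [Bform]
  smul_mem' := by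
    intro c a ha
    simp only [Set.mem_setOf_eq, Bform, Pi.smul_apply, smul_eq_mul] at *
    linear_combination c * ha

/-!
In characteristic `2` split a conic `a` into its diagonal part `diag a = (a₀, a₃, a₅)` and its
off-diagonal part `offDiag a = (a₄, a₂, a₁)`. For a nucleus point `y` (so `diag y = 0`) the squab
is the linear condition `offDiag a ⬝ w = 0`, `w = offDiag y`, and the discriminant
`(offDiag a)² ⬝ diag a - ∏ offDiag a` is affine in `diag a`; counting fibrewise over `offDiag a`
gives the singular conics. The product of two linear forms `l₁ l₂` has `offDiag = l₁ × l₂`, so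
double lines are exactly the conics with `offDiag a = 0` (every element is a square), and a line
pair lies in the squab iff `w ⬝ (l₁ × l₂) = 0`. Counting ordered independent pairs `(l₁, l₂)` with
this property, each line pair arising from exactly `2 (q - 1)` of them by uniqueness of
factorisation, gives the line pairs. Imaginary pairs and nonsingular conics are what is left.
-/

open Finset

theorem ncard_setOf_prod {α β : Type*} [Fintype α] [Fintype β] (P : α → β → Prop) :
    {p : α × β | P p.1 p.2}.ncard = ∑ a, {b | P a b}.ncard := by
  classical
  simp only [Set.ncard_eq_toFinset_card', Set.toFinset_ofPred, card_filter, Fintype.sum_prod_type]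

theorem ncard_preimage_eq_mul {α β : Type*} [Finite α] [Finite β] (f : α → β) {T : Set β}
    {k : ℕ} (h : ∀ b ∈ T, {a | f a = b}.ncard = k) : (f ⁻¹' T).ncard = k * T.ncard := by
  classical
  have := Fintype.ofFinite α
  have := Fintype.ofFinite β
  simp only [Set.ncard_eq_toFinset_card', Set.toFinset_ofPred] at h ⊢
  rw [card_eq_sum_card_fiberwise (f := f) (t := T.toFinset) (by intro a ha; simpa using ha),
    sum_congr rfl fun b hb => ?_, sum_const, smul_eq_mul, mul_comm]
  rw [← h b (Set.mem_toFinset.mp hb)]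
  congr 1
  ext a
  simpa using fun hab : f a = b => hab ▸ Set.mem_toFinset.mp hb

section FiniteField

variable {K : Type*} [Field K] [Fintype K]

theorem card_sub_one_mul_ncard_spans {V : Type*} [AddCommGroup V] [Module K V] [Finite V]
    {S : Set V} (h0 : (0 : V) ∉ S) (hS : ∀ a ∈ S, ∀ t : K, t ≠ 0 → t • a ∈ S) :
    (Fintype.card K - 1) * {P : Submodule K V | ∃ a ∈ S, P = K ∙ a}.ncard = S.ncard := by
  classical
  have := Fintype.ofFinite V
  have hspans : {P : Submodule K V | ∃ a ∈ S, P = K ∙ a} = S.toFinset.image (fun a => K ∙ a) := by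
    ext P; simp [eq_comm]
  have hfibre : ∀ a ∈ S, #{b ∈ S.toFinset | (K ∙ b) = K ∙ a} = Fintype.card K - 1 := by
    intro a ha
    have ha0 : a ≠ 0 := ne_of_mem_of_not_mem ha h0
    have : {b ∈ S.toFinset | (K ∙ b) = K ∙ a} = univ.image (fun t : Kˣ => t • a) := by
      ext b
      simp only [mem_filter, Set.mem_toFinset, mem_image, mem_univ, true_and]
      rw [@eq_comm _ (K ∙ b), Submodule.span_singleton_eq_span_singleton]
      exact ⟨fun ⟨_, h⟩ => h, fun ⟨t, h⟩ => ⟨h ▸ hS a ha t t.ne_zero, t, h⟩⟩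
    rw [this, card_image_of_injective (f := fun t : Kˣ => t • a) _ fun s t h =>
      Units.val_injective (smul_left_injective K ha0 h), card_univ, Fintype.card_units]
  rw [hspans, Set.ncard_coe_finset, Set.ncard_eq_toFinset_card',
    card_eq_sum_card_image (fun a : V => K ∙ a), sum_congr rfl (fun P hP => ?_), sum_const,
    smul_eq_mul, mul_comm]
  obtain ⟨a, ha, rfl⟩ := mem_image.mp hP
  exact hfibre a (Set.mem_toFinset.mp ha)

theorem ncard_setOf_dotProduct_eq {ι : Type*} [Fintype ι] {c : ι → K} (hc : c ≠ 0) (d : K) :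
    {u | c ⬝ᵥ u = d}.ncard = Fintype.card K ^ (Fintype.card ι - 1) := by
  classical
  set φ := dotProductEquiv K ι c
  have hφ : φ ≠ 0 := (dotProductEquiv K ι).map_ne_zero_iff.mpr hc
  obtain ⟨u₀, hu₀⟩ := LinearMap.surjective hφ d
  have hfibre : {u | c ⬝ᵥ u = d} = (u₀ + ·) '' (LinearMap.ker φ) := by
    ext u
    change c ⬝ᵥ u₀ = d at hu₀
    refine ⟨fun hu => ⟨u - u₀, ?_, add_sub_cancel u₀ u⟩, ?_⟩
    · change c ⬝ᵥ (u - u₀) = 0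
      rw [dotProduct_sub, hu, hu₀, sub_self]
    · rintro ⟨x, hx, rfl⟩
      change c ⬝ᵥ x = 0 at hx
      rw [Set.mem_ofPred_eq, dotProduct_add, hx, hu₀, add_zero]
  have hker : Module.finrank K (LinearMap.ker φ) = Fintype.card ι - 1 := by
    have := Module.Dual.finrank_ker_add_one_of_ne_zero hφ
    rw [Module.finrank_fintype_fun_eq_card] at this
    omega
  rw [hfibre, Set.ncard_image_of_injective _ (add_right_injective u₀), ← hker,
    ← Module.card_eq_pow_finrank, ← Nat.card_coe_set_eq, SetLike.coe_sort_coe,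
    Nat.card_eq_fintype_card]

theorem ncard_setOf_linearIndependent_pair_add_card {V : Type*} [AddCommGroup V] [Module K V]
    [Finite V] {b : V} (hb : b ≠ 0) {S : Set V} (hS : ∀ t : K, t • b ∈ S) :
    {c | LinearIndependent K ![b, c] ∧ c ∈ S}.ncard + Fintype.card K = S.ncard := by
  have hset : {c | LinearIndependent K ![b, c] ∧ c ∈ S} = S \ Set.range (fun t : K => t • b) := by
    ext c
    simp [LinearIndependent.pair_iff' hb, and_comm]
  rw [hset, ← Set.ncard_sdiff_add_ncard_of_subset (Set.range_subset_iff.mpr hS),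
    Set.ncard_range_of_injective (smul_left_injective K hb), Nat.card_eq_fintype_card]

end FiniteField

section LinearForms

variable {F : Type} [Field F]

theorem linearIndependent_pair_iff_not_proportional {V : Type*} [AddCommGroup V] [Module F V]
    {l₁ l₂ : V} :
    LinearIndependent F ![l₁, l₂] ↔ (¬ ∃ t : F, l₂ = t • l₁) ∧ (¬ ∃ t : F, l₁ = t • l₂) := by
  constructor
  · intro h
    have h' := LinearIndependent.pair_iff.mp h
    refine ⟨fun ⟨t, ht⟩ => ?_, fun ⟨t, ht⟩ => ?_⟩
    · simpa using (h' t (-1) (by rw [ht]; simp)).2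
    · simpa using (h' (-1) t (by rw [ht]; simp)).1
  · rintro ⟨h₁, h₂⟩
    have hl₁ : l₁ ≠ 0 := fun h => h₂ ⟨0, by rw [h, zero_smul]⟩
    exact (LinearIndependent.pair_iff' hl₁).mpr fun t ht => h₁ ⟨t, ht.symm⟩

/-- `Bform a (veronese X)` is the value of the quadratic form `f_a` at `X`. -/
def veronese (X : Fin 3 → F) : Fin 6 → F :=
  ![X 0 ^ 2, X 0 * X 1, X 0 * X 2, X 1 ^ 2, X 1 * X 2, X 2 ^ 2]

theorem Bform_mulLin_veronese (b c X : Fin 3 → F) :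
    Bform (mulLin b c) (veronese X) = (b ⬝ᵥ X) * (c ⬝ᵥ X) := by
  simp only [Bform, mulLin, veronese, dotProduct, Fin.sum_univ_three, Fin.isValue, Matrix.cons_val,
    cons_val_zero, cons_val_one]
  ring

theorem mulLin_comm (b c : Fin 3 → F) : mulLin b c = mulLin c b := by
  ext i
  fin_cases i <;> simp only [mulLin, Fin.isValue, Fin.zero_eta, Fin.mk_one, Fin.reduceFinMk,
    Matrix.cons_val, cons_val_zero, cons_val_one] <;> ring

theorem mulLin_smul_left (t : F) (b c : Fin 3 → F) : mulLin (t • b) c = t • mulLin b c := by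
  ext i
  fin_cases i <;> simp only [mulLin, Pi.smul_apply, smul_eq_mul, Fin.isValue, Fin.zero_eta,
    Fin.mk_one, Fin.reduceFinMk, Matrix.cons_val, cons_val_zero, cons_val_one] <;> ring

theorem mulLin_smul_right (t : F) (b c : Fin 3 → F) : mulLin b (t • c) = t • mulLin b c := by
  rw [mulLin_comm, mulLin_smul_left, mulLin_comm]

theorem mulLin_units_smul (t : Fˣ) (b c : Fin 3 → F) : mulLin (t • b) (t⁻¹ • c) = mulLin b c := by
  rw [Units.smul_def, Units.smul_def, mulLin_smul_left, mulLin_smul_right, smul_smul,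
    Units.mul_inv, one_smul]

theorem mulLin_zero_left (c : Fin 3 → F) : mulLin 0 c = 0 := by
  ext i; fin_cases i <;> simp [mulLin]

theorem exists_dotProduct_ne_zero_and_ne_zero {ι : Type*} [Fintype ι] {b d : ι → F}
    (hb : b ≠ 0) (hd : d ≠ 0) : ∃ X, b ⬝ᵥ X ≠ 0 ∧ d ⬝ᵥ X ≠ 0 := by
  obtain ⟨X, hX⟩ := not_forall.mp (mt dotProduct_eq_zero_iff.mp hb)
  obtain ⟨Y, hY⟩ := not_forall.mp (mt dotProduct_eq_zero_iff.mp hd)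
  by_cases hdX : d ⬝ᵥ X = 0
  · by_cases hbY : b ⬝ᵥ Y = 0
    · exact ⟨X + Y, by simpa [dotProduct_add, hbY], by simpa [dotProduct_add, hdX]⟩
    · exact ⟨Y, hbY, hY⟩
  · exact ⟨X, hX, hdX⟩

theorem mulLin_ne_zero {b c : Fin 3 → F} (hb : b ≠ 0) (hc : c ≠ 0) : mulLin b c ≠ 0 := by
  obtain ⟨X, hbX, hcX⟩ := exists_dotProduct_ne_zero_and_ne_zero hb hc
  intro h
  apply mul_ne_zero hbX hcX
  rw [← Bform_mulLin_veronese, h]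
  simp [Bform]

theorem exists_eq_smul_of_dotProduct_eq_zero_imp {b l : Fin 3 → F} (hl : l ≠ 0)
    (h : ∀ X, l ⬝ᵥ X = 0 → b ⬝ᵥ X = 0) : ∃ s : F, b = s • l := by
  have hcross : l ⨯₃ b = 0 := by
    refine dotProduct_eq_zero _ fun X => ?_
    rw [dotProduct_comm, triple_product_permutation, triple_product_permutation,
      h _ (dot_cross_self X l)]
  by_contra! hne
  exact crossProduct_ne_zero_iff_linearIndependent.mpr
    ((LinearIndependent.pair_iff' hl).mpr fun s => (hne s).symm) hcross

theorem ker_le_or_ker_le_of_mul_eq_mul {ι : Type*} [Fintype ι] {b c l₁ l₂ : ι → F}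
    (H : ∀ X, (b ⬝ᵥ X) * (c ⬝ᵥ X) = (l₁ ⬝ᵥ X) * (l₂ ⬝ᵥ X)) :
    (∀ X, l₁ ⬝ᵥ X = 0 → b ⬝ᵥ X = 0) ∨ (∀ X, l₁ ⬝ᵥ X = 0 → c ⬝ᵥ X = 0) := by
  by_contra! ⟨⟨u, hu, hbu⟩, ⟨v, hv, hcv⟩⟩
  have hcu : c ⬝ᵥ u = 0 := by simpa [hu, hbu] using H u
  have hbv : b ⬝ᵥ v = 0 := by simpa [hv, hcv] using H v
  have := H (u + v)
  simp only [dotProduct_add, hu, hv, hcu, hbv, add_zero, zero_add, zero_mul] at this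
  exact mul_ne_zero hbu hcv this

variable {b c l₁ l₂ : Fin 3 → F}

theorem exists_eq_units_smul_of_mul_eq_mul (H : ∀ X, (b ⬝ᵥ X) * (c ⬝ᵥ X) = (l₁ ⬝ᵥ X) * (l₂ ⬝ᵥ X))
    (h₁ : l₁ ≠ 0) (h₂ : l₂ ≠ 0) (hb : ∀ X, l₁ ⬝ᵥ X = 0 → b ⬝ᵥ X = 0) :
    ∃ t : Fˣ, b = t • l₁ ∧ c = t⁻¹ • l₂ := by
  obtain ⟨s, rfl⟩ := exists_eq_smul_of_dotProduct_eq_zero_imp h₁ hb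
  have hs : s ≠ 0 := by
    rintro rfl
    obtain ⟨X, h₁X, h₂X⟩ := exists_dotProduct_ne_zero_and_ne_zero h₁ h₂
    exact mul_ne_zero h₁X h₂X (by simpa using (H X).symm)
  refine ⟨Units.mk0 s hs, rfl, ?_⟩
  have hc : s • c - l₂ = 0 := by
    by_contra hne
    obtain ⟨X, h₁X, hX⟩ := exists_dotProduct_ne_zero_and_ne_zero h₁ hne
    apply mul_ne_zero h₁X hX
    have HX := H X
    simp only [sub_dotProduct, smul_dotProduct, smul_eq_mul] at HX ⊢
    linear_combination HX
  rw [Units.smul_def, Units.val_inv_eq_inv_val, Units.val_mk0, ← sub_eq_zero.mp hc, smul_smul,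
    inv_mul_cancel₀ hs, one_smul]

theorem mulLin_eq_mulLin_iff (h₁ : l₁ ≠ 0) (h₂ : l₂ ≠ 0) :
    mulLin b c = mulLin l₁ l₂ ↔
      ∃ t : Fˣ, (b = t • l₁ ∧ c = t⁻¹ • l₂) ∨ (b = t • l₂ ∧ c = t⁻¹ • l₁) := by
  constructor
  · intro h
    have H : ∀ X, (b ⬝ᵥ X) * (c ⬝ᵥ X) = (l₁ ⬝ᵥ X) * (l₂ ⬝ᵥ X) := fun X => by
      rw [← Bform_mulLin_veronese, h, Bform_mulLin_veronese]
    rcases ker_le_or_ker_le_of_mul_eq_mul H with hb | hc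
    · exact ⟨_, Or.inl (exists_eq_units_smul_of_mul_eq_mul H h₁ h₂ hb).choose_spec⟩
    · obtain ⟨t, hc, hb⟩ :=
        exists_eq_units_smul_of_mul_eq_mul (fun X => (mul_comm _ _).trans (H X)) h₁ h₂ hc
      exact ⟨t⁻¹, Or.inr ⟨hb, by rwa [inv_inv]⟩⟩
  · rintro ⟨t, ⟨rfl, rfl⟩ | ⟨rfl, rfl⟩⟩
    · exact mulLin_units_smul t l₁ l₂
    · rw [mulLin_units_smul, mulLin_comm]

end LinearForms

section DiagOffDiag

variable {α : Type*}

def diag (a : Fin 6 → α) : Fin 3 → α := ![a 0, a 3, a 5]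

/-- Ordered so that in characteristic `2` it is the cross product of the factors of a line pair
(`offDiag_mulLin`). -/
def offDiag (a : Fin 6 → α) : Fin 3 → α := ![a 4, a 2, a 1]

theorem ncard_setOf_offDiag_diag [Fintype α] (P : (Fin 3 → α) → (Fin 3 → α) → Prop) :
    {a : Fin 6 → α | P (offDiag a) (diag a)}.ncard = ∑ v, {u | P v u}.ncard := by
  let e : (Fin 6 → α) ≃ (Fin 3 → α) × (Fin 3 → α) :=
    { toFun a := (offDiag a, diag a)
      invFun p := ![p.2 0, p.1 2, p.1 1, p.2 1, p.1 0, p.2 2]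
      left_inv a := by ext i; fin_cases i <;> rfl
      right_inv p := by ext i <;> fin_cases i <;> rfl }
  have : {a | P (offDiag a) (diag a)} = e.symm '' {p | P p.1 p.2} := by
    rw [e.symm.image_eq_preimage_symm, e.symm_symm]
    rfl
  rw [this, Set.ncard_image_of_injective _ e.symm.injective, ncard_setOf_prod]

theorem Bform_eq_diag_add_offDiag {F : Type} [Field F] (a y : Fin 6 → F) :
    Bform a y = diag a ⬝ᵥ diag y + offDiag a ⬝ᵥ offDiag y := by
  simp only [Bform, diag, offDiag, dotProduct, Fin.sum_univ_three, Fin.isValue, Matrix.cons_val,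
    cons_val_zero, cons_val_one]
  ring

theorem mem_squab_iff {F : Type} [Field F] {y : Fin 6 → F} (hy : diag y = 0) {a : Fin 6 → F} :
    a ∈ squab y ↔ offDiag a ⬝ᵥ offDiag y = 0 := by
  change Bform a y = 0 ↔ _
  rw [Bform_eq_diag_add_offDiag, hy, dotProduct_zero, zero_add]

end DiagOffDiag

section ConicTypes

variable {F : Type} [Field F] {a : Fin 6 → F}

theorem disc_smul (t : F) (a : Fin 6 → F) : disc (t • a) = t ^ 3 * disc a := by
  simp only [disc, Pi.smul_apply, smul_eq_mul]
  ring

theorem disc_mulLin (b c : Fin 3 → F) : disc (mulLin b c) = 0 := by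
  simp only [disc, mulLin, Fin.isValue, Matrix.cons_val, cons_val_zero, cons_val_one]
  ring

theorem isRealPair_iff :
    IsRealPair a ↔ ∃ b c : Fin 3 → F, LinearIndependent F ![b, c] ∧ a = mulLin b c := by
  simp only [IsRealPair, linearIndependent_pair_iff_not_proportional, and_assoc]

theorem IsDoubleLine.smul (h : IsDoubleLine a) {t : F} (ht : t ≠ 0) : IsDoubleLine (t • a) := by
  obtain ⟨c, l, hc, hl, rfl⟩ := h
  exact ⟨t * c, l, mul_ne_zero ht hc, hl, smul_smul t c _⟩

theorem IsRealPair.smul (h : IsRealPair a) {t : F} (ht : t ≠ 0) : IsRealPair (t • a) := by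
  obtain ⟨b, c, hbc, rfl⟩ := isRealPair_iff.mp h
  refine isRealPair_iff.mpr ⟨t • b, c, ?_, (mulLin_smul_left t b c).symm⟩
  rw [LinearIndependent.pair_iff] at hbc ⊢
  intro s r h
  obtain ⟨hst, hr⟩ := hbc (s * t) r (by rwa [mul_smul])
  exact ⟨(mul_eq_zero.mp hst).resolve_right ht, hr⟩

theorem IsImagPair.smul (h : IsImagPair a) {t : F} (ht : t ≠ 0) : IsImagPair (t • a) := by
  refine ⟨by rw [disc_smul, h.1, mul_zero], fun ⟨b, c, hbc⟩ => h.2 ⟨t⁻¹ • b, c, ?_⟩⟩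
  rw [mulLin_smul_left, ← hbc, smul_smul, inv_mul_cancel₀ ht, one_smul]

theorem IsNonsingular.smul (h : IsNonsingular a) {t : F} (ht : t ≠ 0) :
    IsNonsingular (t • a) := by
  rw [IsNonsingular, disc_smul]
  exact mul_ne_zero (pow_ne_zero 3 ht) h

theorem IsImagPair.not_isDoubleLine (h : IsImagPair a) : ¬ IsDoubleLine a := by
  rintro ⟨c, l, -, -, rfl⟩
  exact h.2 ⟨c • l, l, (mulLin_smul_left c l l).symm⟩

theorem IsImagPair.not_isRealPair (h : IsImagPair a) : ¬ IsRealPair a := by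
  rintro ⟨b, c, -, -, rfl⟩
  exact h.2 ⟨b, c, rfl⟩

theorem isDoubleLine_or_isRealPair_or_isImagPair (ha : a ≠ 0) (hd : disc a = 0) :
    IsDoubleLine a ∨ IsRealPair a ∨ IsImagPair a := by
  by_cases hfac : ∃ l₁ l₂ : Fin 3 → F, a = mulLin l₁ l₂
  · obtain ⟨l₁, l₂, rfl⟩ := hfac
    by_cases hli : LinearIndependent F ![l₁, l₂]
    · exact Or.inr (Or.inl (isRealPair_iff.mpr ⟨l₁, l₂, hli, rfl⟩))
    have hl₁ : l₁ ≠ 0 := by rintro rfl; exact ha (mulLin_zero_left l₂)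
    obtain ⟨t, rfl⟩ := not_forall_not.mp (mt (LinearIndependent.pair_iff' hl₁).mpr hli)
    have ht : t ≠ 0 := by rintro rfl; exact ha (by rw [mulLin_smul_right, zero_smul])
    exact Or.inl ⟨t, l₁, ht, hl₁, mulLin_smul_right t l₁ l₁⟩
  · exact Or.inr (Or.inr ⟨hd, hfac⟩)

end ConicTypes

section CharTwo

variable {F : Type} [Field F] [CharP F 2] {a : Fin 6 → F}

theorem offDiag_mulLin (b c : Fin 3 → F) : offDiag (mulLin b c) = b ⨯₃ c := by
  ext i
  fin_cases i <;> simp [offDiag, mulLin, cross_apply, CharTwo.sub_eq_add, add_comm, mul_comm]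

theorem disc_eq_of_charTwo (a : Fin 6 → F) :
    disc a = (offDiag a ^ 2) ⬝ᵥ diag a - ∏ i, offDiag a i := by
  have h2 : (2 : F) = 0 := CharTwo.two_eq_zero
  simp only [disc, diag, offDiag, dotProduct, Pi.pow_apply, Fin.sum_univ_three, Fin.prod_univ_three,
    Fin.isValue, Matrix.cons_val, cons_val_zero, cons_val_one]
  linear_combination
    (a 1 * a 2 * a 4 + 2 * a 0 * a 3 * a 5 - a 0 * a 4 ^ 2 - a 3 * a 2 ^ 2 - a 5 * a 1 ^ 2) * h2

theorem IsDoubleLine.offDiag_eq_zero (h : IsDoubleLine a) : offDiag a = 0 := by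
  obtain ⟨c, l, -, -, rfl⟩ := h
  rw [← mulLin_smul_left, offDiag_mulLin, map_smul, LinearMap.smul_apply, cross_self, smul_zero]

theorem IsRealPair.offDiag_ne_zero (h : IsRealPair a) : offDiag a ≠ 0 := by
  obtain ⟨b, c, hbc, rfl⟩ := isRealPair_iff.mp h
  rwa [offDiag_mulLin, crossProduct_ne_zero_iff_linearIndependent]

theorem IsRealPair.not_isDoubleLine (h : IsRealPair a) : ¬ IsDoubleLine a :=
  fun hD => h.offDiag_ne_zero hD.offDiag_eq_zero

theorem isRealPair_mulLin_iff {b c : Fin 3 → F} :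
    IsRealPair (mulLin b c) ↔ LinearIndependent F ![b, c] :=
  ⟨fun h => crossProduct_ne_zero_iff_linearIndependent.mp (offDiag_mulLin b c ▸ h.offDiag_ne_zero),
    fun h => isRealPair_iff.mpr ⟨b, c, h, rfl⟩⟩

theorem isDoubleLine_iff [PerfectRing F 2] : IsDoubleLine a ↔ a ≠ 0 ∧ offDiag a = 0 := by
  refine ⟨fun h => ⟨?_, h.offDiag_eq_zero⟩, fun ⟨ha, hoff⟩ => ?_⟩
  · obtain ⟨c, l, hc, hl, rfl⟩ := h
    exact smul_ne_zero hc (mulLin_ne_zero hl hl)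
  obtain ⟨l, hl⟩ : ∃ l : Fin 3 → F, ∀ i, l i ^ 2 = diag a i :=
    ⟨_, fun i => frobeniusEquiv_symm_pow_p F 2 _⟩
  have hmul : a = mulLin l l := by
    have h2 : (2 : F) = 0 := CharTwo.two_eq_zero
    have hl₀ := hl 0; have hl₁ := hl 1; have hl₂ := hl 2
    have e₀ := congrFun hoff 0; have e₁ := congrFun hoff 1; have e₂ := congrFun hoff 2
    simp only [diag, offDiag, Matrix.cons_val, Pi.zero_apply] at hl₀ hl₁ hl₂ e₀ e₁ e₂
    ext i
    fin_cases i <;> simp [mulLin, ← hl₀, ← hl₁, ← hl₂, e₀, e₁, e₂, sq] <;> ring_nf <;> simp [h2]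
  refine ⟨1, l, one_ne_zero, ?_, by rw [one_smul, ← hmul]⟩
  rintro hl0
  exact ha (by rw [hmul, hl0, mulLin_zero_left])

end CharTwo

section Counting

variable {F : Type} [Field F] [Fintype F]

local notation "q" => Fintype.card F

theorem card_sub_one_mul_numConics (W : Submodule F (Fin 6 → F)) {T : (Fin 6 → F) → Prop}
    (hT : ∀ {a}, T a → ∀ {t : F}, t ≠ 0 → T (t • a)) :
    (q - 1) * numConics W T = {a | a ≠ 0 ∧ a ∈ W ∧ T a}.ncard := by
  have hS : ∀ a ∈ {a | a ≠ 0 ∧ a ∈ W ∧ T a}, ∀ t : F, t ≠ 0 → t • a ∈ {a | a ≠ 0 ∧ a ∈ W ∧ T a} :=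
    fun a ⟨ha, haW, haT⟩ t ht => ⟨smul_ne_zero ht ha, W.smul_mem t haW, hT haT ht⟩
  rw [← card_sub_one_mul_ncard_spans (fun h => h.1 rfl) hS]
  simp only [numConics, Set.mem_ofPred_eq, and_assoc]

theorem ncard_nonsingular_add_ncard_singular (W : Submodule F (Fin 6 → F)) :
    {a | a ≠ 0 ∧ a ∈ W ∧ IsNonsingular a}.ncard + {a | a ∈ W ∧ disc a = 0}.ncard =
      (W : Set (Fin 6 → F)).ncard := by
  have hset : {a | a ≠ 0 ∧ a ∈ W ∧ IsNonsingular a} =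
      (W : Set (Fin 6 → F)) \ {a | a ∈ W ∧ disc a = 0} := by
    ext a
    have : disc a ≠ 0 → a ≠ 0 := fun h ha => h (by simp [ha, disc])
    simp only [Set.mem_ofPred_eq, Set.mem_sdiff, SetLike.mem_coe, IsNonsingular]
    tauto
  rw [hset, Set.ncard_sdiff_add_ncard_of_subset fun a ha => ha.1]

theorem ncard_singular_eq_add [CharP F 2] (W : Submodule F (Fin 6 → F)) :
    {a | a ∈ W ∧ disc a = 0}.ncard =
      {a | a ≠ 0 ∧ a ∈ W ∧ IsDoubleLine a}.ncard + {a | a ≠ 0 ∧ a ∈ W ∧ IsRealPair a}.ncard +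
        {a | a ≠ 0 ∧ a ∈ W ∧ IsImagPair a}.ncard + 1 := by
  have hset : {a | a ∈ W ∧ disc a = 0} = insert 0
      ({a | a ≠ 0 ∧ a ∈ W ∧ IsDoubleLine a} ∪ {a | a ≠ 0 ∧ a ∈ W ∧ IsRealPair a} ∪
        {a | a ≠ 0 ∧ a ∈ W ∧ IsImagPair a}) := by
    ext a
    by_cases ha : a = 0
    · simp [ha, disc]
    simp only [Set.mem_ofPred_eq, Set.mem_insert_iff, Set.mem_union, ha, ne_eq, not_false_eq_true,
      true_and, false_or, or_assoc, ← and_or_left]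
    refine and_congr_right fun _ => ⟨isDoubleLine_or_isRealPair_or_isImagPair ha, ?_⟩
    rintro (⟨c, l, -, -, rfl⟩ | ⟨b, c, -, -, rfl⟩ | h)
    · rw [disc_smul, disc_mulLin, mul_zero]
    · exact disc_mulLin b c
    · exact h.1
  rw [hset, Set.ncard_insert_of_notMem (by simp),
    Set.ncard_union_eq (Set.disjoint_left.mpr fun a ha hI => ?_),
    Set.ncard_union_eq (Set.disjoint_left.mpr fun a hD hR => hR.2.2.not_isDoubleLine hD.2.2)]
  rcases ha with hD | hR
  · exact hI.2.2.not_isDoubleLine hD.2.2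
  · exact hI.2.2.not_isRealPair hR.2.2

theorem ncard_squab {y : Fin 6 → F} (hy : y ≠ 0) : (squab y : Set (Fin 6 → F)).ncard = q ^ 5 := by
  have : (squab y : Set (Fin 6 → F)) = {a | y ⬝ᵥ a = 0} := by
    ext a
    change Bform a y = 0 ↔ y ⬝ᵥ a = 0
    rw [Bform, dotProduct, Fin.sum_univ_six]
    ring_nf
  rw [this, ncard_setOf_dotProduct_eq hy, Fintype.card_fin]

theorem ncard_mulLin_fibre {l₁ l₂ : Fin 3 → F} (h : LinearIndependent F ![l₁, l₂]) :
    {p : (Fin 3 → F) × (Fin 3 → F) | mulLin p.1 p.2 = mulLin l₁ l₂}.ncard = 2 * (q - 1) := by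
  classical
  have h₁ : l₁ ≠ 0 := by simpa using h.ne_zero 0
  have h₂ : l₂ ≠ 0 := by simpa using h.ne_zero 1
  let f : Fˣ ⊕ Fˣ → (Fin 3 → F) × (Fin 3 → F) :=
    Sum.elim (fun t => (t • l₁, t⁻¹ • l₂)) (fun t => (t • l₂, t⁻¹ • l₁))
  have hrange : {p : (Fin 3 → F) × (Fin 3 → F) | mulLin p.1 p.2 = mulLin l₁ l₂} = Set.range f := by
    ext ⟨b, c⟩
    simp [mulLin_eq_mulLin_iff h₁ h₂, f, Prod.ext_iff, exists_or, eq_comm]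
  have hsmul : ∀ {l : Fin 3 → F}, l ≠ 0 → ∀ {s t : Fˣ}, s • l = t • l → s = t :=
    fun hl _ _ hst => Units.ext (smul_left_injective F hl hst)
  have hmixed : ∀ s t : Fˣ, s • l₁ ≠ t • l₂ := fun s t hst =>
    s.ne_zero (LinearIndependent.pair_iff.mp h s (-t) (by
      rw [neg_smul, ← sub_eq_add_neg, sub_eq_zero]; exact hst)).1
  have hf : f.Injective := by
    rintro (s | s) (t | t) hst <;> simp only [f, Sum.elim_inl, Sum.elim_inr, Prod.mk.injEq] at hst
    · rw [hsmul h₁ hst.1]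
    · exact absurd hst.1 (hmixed s t)
    · exact absurd hst.1.symm (hmixed t s)
    · rw [hsmul h₂ hst.1]
  rw [hrange, Set.ncard_range_of_injective hf, Nat.card_sum, Nat.card_eq_fintype_card,
    Fintype.card_units]
  ring

theorem ncard_linearIndependent_pairs_dotProduct_cross {w : Fin 3 → F} (hw : w ≠ 0) :
    {p : (Fin 3 → F) × (Fin 3 → F) |
        LinearIndependent F ![p.1, p.2] ∧ w ⬝ᵥ p.1 ⨯₃ p.2 = 0}.ncard =
      (q - 1) * (q ^ 3 - q) + (q ^ 3 - q) * (q ^ 2 - q) := by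
  classical
  have hcube : Nat.card (Fin 3 → F) = q ^ 3 := by simp
  have hfibre : ∀ b : Fin 3 → F, {c | LinearIndependent F ![b, c] ∧ w ⬝ᵥ b ⨯₃ c = 0}.ncard =
      (if b ≠ 0 ∧ w ⨯₃ b = 0 then q ^ 3 - q else 0) + (if w ⨯₃ b ≠ 0 then q ^ 2 - q else 0) := by
    intro b
    have htriple : ∀ c, w ⬝ᵥ b ⨯₃ c = (w ⨯₃ b) ⬝ᵥ c := fun c => by
      rw [triple_product_permutation, triple_product_permutation, dotProduct_comm]
    simp only [htriple]
    by_cases hb : b = 0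
    · subst hb
      have hdep : ∀ c, ¬ LinearIndependent F ![(0 : Fin 3 → F), c] := fun c h => h.ne_zero 0 rfl
      simp [hdep]
    by_cases hwb : w ⨯₃ b = 0
    · have := ncard_setOf_linearIndependent_pair_add_card (K := F) hb (S := Set.univ)
        fun _ => trivial
      simp only [hwb, zero_dotProduct, Set.mem_univ, and_true, Set.ncard_univ, hcube] at this ⊢
      simp only [ne_eq, hb, not_false_eq_true, not_true_eq_false, ↓reduceIte, add_zero]
      omega
    · have := ncard_setOf_linearIndependent_pair_add_card hb (S := {c | (w ⨯₃ b) ⬝ᵥ c = 0})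
        fun t : F => by
          rw [Set.mem_ofPred_eq, dotProduct_smul, dotProduct_comm, dot_cross_self, smul_zero]
      rw [ncard_setOf_dotProduct_eq hwb, Fintype.card_fin, show 3 - 1 = 2 from rfl] at this
      simp only [Set.mem_ofPred_eq] at this
      simp only [ne_eq, hwb, and_false, ↓reduceIte, not_false_eq_true, zero_add]
      omega
  have hline : {b : Fin 3 → F | b ≠ 0 ∧ w ⨯₃ b = 0}.ncard = q - 1 := by
    have hdep : ∀ b, w ⨯₃ b = 0 ↔ ∃ t : F, t • w = b := fun b => by
      rw [← not_iff_not, ← ne_eq, crossProduct_ne_zero_iff_linearIndependent,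
        LinearIndependent.pair_iff' hw, not_exists]
    have : {b : Fin 3 → F | b ≠ 0 ∧ w ⨯₃ b = 0} = Set.range (fun t : F => t • w) \ {0} := by
      ext b
      simp only [hdep, Set.mem_ofPred_eq, Set.mem_sdiff, Set.mem_range, Set.mem_singleton_iff,
        and_comm]
    rw [this, Set.ncard_sdiff_singleton_of_mem (Set.mem_range.mpr ⟨0, zero_smul F w⟩),
      Set.ncard_range_of_injective (smul_left_injective F hw), Nat.card_eq_fintype_card]
  have hoff : {b : Fin 3 → F | w ⨯₃ b ≠ 0}.ncard = q ^ 3 - q := by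
    have := ncard_setOf_linearIndependent_pair_add_card (K := F) hw (S := Set.univ) fun _ => trivial
    simp only [Set.mem_univ, and_true, Set.ncard_univ, hcube] at this
    simp only [ne_eq, crossProduct_ne_zero_iff_linearIndependent]
    omega
  rw [ncard_setOf_prod (fun b c => LinearIndependent F ![b, c] ∧ w ⬝ᵥ b ⨯₃ c = 0),
    Finset.sum_congr rfl fun b _ => hfibre b]
  simp only [sum_add_distrib, sum_ite, sum_const_zero, sum_const, smul_eq_mul, add_zero]
  rw [← Set.toFinset_ofPred, ← Set.toFinset_ofPred, ← Set.ncard_eq_toFinset_card',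
    ← Set.ncard_eq_toFinset_card', hline, hoff]

end Counting

section Nucleus

variable {F : Type} [Field F] [Fintype F] [CharP F 2] {y : Fin 6 → F}

local notation "q" => Fintype.card F

theorem ncard_squab_doubleLine_add_one (hy : diag y = 0) :
    {a | a ≠ 0 ∧ a ∈ squab y ∧ IsDoubleLine a}.ncard + 1 = q ^ 3 := by
  have hset : {a | a ≠ 0 ∧ a ∈ squab y ∧ IsDoubleLine a} = {a | offDiag a = 0} \ {0} := by
    ext a
    simp only [Set.mem_ofPred_eq, Set.mem_sdiff, Set.mem_singleton_iff, isDoubleLine_iff,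
      mem_squab_iff hy]
    constructor
    · rintro ⟨ha, -, -, hoff⟩; exact ⟨hoff, ha⟩
    · rintro ⟨hoff, ha⟩; exact ⟨ha, by rw [hoff, zero_dotProduct], ha, hoff⟩
  have hoff : {a : Fin 6 → F | offDiag a = 0}.ncard = q ^ 3 := by
    rw [ncard_setOf_offDiag_diag (fun v _ => v = 0),
      Fintype.sum_eq_single 0 fun v hv => by simp [hv]]
    simp
  rw [hset, Set.ncard_sdiff_singleton_add_one (by simp [offDiag]), hoff]

theorem ncard_squab_singular_add (hy : diag y = 0) (hw : offDiag y ≠ 0) :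
    {a | a ∈ squab y ∧ disc a = 0}.ncard + q ^ 2 = q ^ 4 + q ^ 3 := by
  classical
  have hfibre : ∀ v : Fin 3 → F,
      {u | v ⬝ᵥ offDiag y = 0 ∧ (v ^ 2) ⬝ᵥ u = ∏ i, v i}.ncard + (if v = 0 then q ^ 2 else 0) =
        (if v = 0 then q ^ 3 else 0) + (if v ⬝ᵥ offDiag y = 0 then q ^ 2 else 0) := by
    intro v
    by_cases hv : v = 0
    · simp [hv]
    have hv2 : v ^ 2 ≠ 0 := fun h =>
      hv (funext fun i => pow_eq_zero_iff two_ne_zero |>.mp (congrFun h i))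
    by_cases hvw : v ⬝ᵥ offDiag y = 0
    · simp [hv, hvw, ncard_setOf_dotProduct_eq hv2]
    · simp [hv, hvw]
  have hplane : {v : Fin 3 → F | v ⬝ᵥ offDiag y = 0}.ncard = q ^ 2 := by
    simpa [dotProduct_comm] using ncard_setOf_dotProduct_eq hw 0
  have hset : {a | a ∈ squab y ∧ disc a = 0} =
      {a | offDiag a ⬝ᵥ offDiag y = 0 ∧ (offDiag a ^ 2) ⬝ᵥ diag a = ∏ i, offDiag a i} := by
    ext a
    simp only [Set.mem_ofPred_eq, mem_squab_iff hy, disc_eq_of_charTwo, sub_eq_zero]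
  have hsum := Finset.sum_congr rfl fun v (_ : v ∈ univ) => hfibre v
  simp only [sum_add_distrib, sum_ite_eq', mem_univ, if_true] at hsum
  simp only [sum_ite, sum_const_zero, sum_const, smul_eq_mul, add_zero] at hsum
  rw [hset, ncard_setOf_offDiag_diag (fun v u => v ⬝ᵥ offDiag y = 0 ∧ (v ^ 2) ⬝ᵥ u = ∏ i, v i),
    hsum, ← Set.toFinset_ofPred, ← Set.ncard_eq_toFinset_card', hplane]
  ring

theorem two_mul_card_sub_one_mul_ncard_squab_realPair (hy : diag y = 0)
    (hw : offDiag y ≠ 0) :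
    2 * (q - 1) * {a | a ≠ 0 ∧ a ∈ squab y ∧ IsRealPair a}.ncard =
      (q - 1) * (q ^ 3 - q) + (q ^ 3 - q) * (q ^ 2 - q) := by
  rw [← ncard_linearIndependent_pairs_dotProduct_cross hw,
    ← ncard_preimage_eq_mul (fun p : (Fin 3 → F) × (Fin 3 → F) => mulLin p.1 p.2) ?_]
  · congr 1
    ext ⟨b, c⟩
    simp only [Set.mem_preimage, Set.mem_ofPred_eq, isRealPair_mulLin_iff, mem_squab_iff hy,
      offDiag_mulLin, dotProduct_comm (b ⨯₃ c)]
    exact ⟨fun ⟨_, hbc, hli⟩ => ⟨hli, hbc⟩, fun ⟨hli, hbc⟩ =>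
      ⟨mulLin_ne_zero (by simpa using hli.ne_zero 0) (by simpa using hli.ne_zero 1), hbc, hli⟩⟩
  · rintro a ⟨-, -, ha⟩
    obtain ⟨l₁, l₂, hli, rfl⟩ := isRealPair_iff.mp ha
    exact ncard_mulLin_fibre hli

theorem numConics_squab_isDoubleLine (hy : diag y = 0) :
    numConics (squab y) IsDoubleLine = q ^ 2 + q + 1 := by
  have h := ncard_squab_doubleLine_add_one hy
  rw [← card_sub_one_mul_numConics _ IsDoubleLine.smul] at h
  have hq : 1 < q := Fintype.one_lt_card
  zify [hq.le] at h ⊢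
  apply mul_left_cancel₀ (show (q : ℤ) - 1 ≠ 0 by omega)
  linear_combination h

theorem two_mul_numConics_squab_isRealPair (hy : diag y = 0) (hw : offDiag y ≠ 0) :
    2 * numConics (squab y) IsRealPair = q ^ 3 + 2 * q ^ 2 + q := by
  have h := two_mul_card_sub_one_mul_ncard_squab_realPair hy hw
  rw [← card_sub_one_mul_numConics _ IsRealPair.smul] at h
  have hq : 1 < q := Fintype.one_lt_card
  zify [hq.le, Nat.le_self_pow three_ne_zero q, Nat.le_self_pow two_ne_zero q] at h ⊢
  have hq' : ((q : ℤ) - 1) ^ 2 ≠ 0 := pow_ne_zero 2 (by omega)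
  apply mul_left_cancel₀ hq'
  linear_combination h

theorem numConics_squab_isRealPair (hy : diag y = 0) (hw : offDiag y ≠ 0) :
    numConics (squab y) IsRealPair = (q ^ 3 + 2 * q ^ 2 + q) / 2 := by
  rw [← two_mul_numConics_squab_isRealPair hy hw, Nat.mul_div_cancel_left _ two_pos]

theorem numConics_squab_isImagPair (hy : diag y = 0) (hw : offDiag y ≠ 0) :
    numConics (squab y) IsImagPair = (q ^ 3 - q) / 2 := by
  have hR := two_mul_numConics_squab_isRealPair hy hw
  have hD := numConics_squab_isDoubleLine hy
  have h := ncard_squab_singular_add hy hw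
  rw [ncard_singular_eq_add, ← card_sub_one_mul_numConics _ (T := IsDoubleLine) IsDoubleLine.smul,
    ← card_sub_one_mul_numConics _ (T := IsRealPair) IsRealPair.smul,
    ← card_sub_one_mul_numConics _ (T := IsImagPair) IsImagPair.smul, hD] at h
  have hq : 1 < q := Fintype.one_lt_card
  suffices 2 * numConics (squab y) IsImagPair = q ^ 3 - q by omega
  zify [hq.le, Nat.le_self_pow three_ne_zero q] at h hR ⊢
  apply mul_left_cancel₀ (show (q : ℤ) - 1 ≠ 0 by omega)
  linear_combination 2 * h - (q - 1) * hR

theorem numConics_squab_isNonsingular (hy₀ : y ≠ 0) (hy : diag y = 0) (hw : offDiag y ≠ 0) :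
    numConics (squab y) IsNonsingular = q ^ 4 - q ^ 2 := by
  have h := ncard_nonsingular_add_ncard_singular (squab y)
  rw [← card_sub_one_mul_numConics _ (T := IsNonsingular) IsNonsingular.smul, ncard_squab hy₀] at h
  have hs := ncard_squab_singular_add hy hw
  have hq : 1 < q := Fintype.one_lt_card
  zify [hq.le, Nat.pow_le_pow_right (by omega : 0 < q) (show 2 ≤ 4 by norm_num)] at h hs ⊢
  apply mul_left_cancel₀ (show (q : ℤ) - 1 ≠ 0 by omega)
  linear_combination h - hs

end Nucleus

/-- conic counts of the squab of a nucleus-plane point, `q` even. -/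
theorem squab_nucleus_conic_counts (F : Type) [Field F] [Fintype F] (q : ℕ)
    (hq : Fintype.card F = q) (heven : Even q) (y : Fin 6 → F) (hy : y ≠ 0)
    (h0 : y 0 = 0) (h3 : y 3 = 0) (h5 : y 5 = 0) :
    numConics (squab y) IsDoubleLine = q ^ 2 + q + 1 ∧
    numConics (squab y) IsRealPair = (q ^ 3 + 2 * q ^ 2 + q) / 2 ∧
    numConics (squab y) IsImagPair = (q ^ 3 - q) / 2 ∧
    numConics (squab y) IsNonsingular = q ^ 4 - q ^ 2 := by
  subst hq
  have : CharP F 2 :=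
    ringChar.of_eq (FiniteField.even_card_iff_char_two.mpr (Nat.even_iff.mp heven))
  have hdiag : diag y = 0 := by
    ext i
    fin_cases i
    exacts [h0, h3, h5]
  have hoff : offDiag y ≠ 0 := by
    contrapose! hy
    ext i
    fin_cases i
    exacts [h0, congrFun hy 2, congrFun hy 1, h3, congrFun hy 0, h5]
  exact ⟨numConics_squab_isDoubleLine hdiag, numConics_squab_isRealPair hdiag hoff,
    numConics_squab_isImagPair hdiag hoff, numConics_squab_isNonsingular hy hdiag hoff⟩
end Conics
end

section
/- Let q be any prime power and F = GF(q). Let y ∈ F^6 be nonzero with rank(M_y) ≠ 2. Then the squab S_y contains exactly q+1 double-line conics. -/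
/-!
A double line `c • l²` lies in the squab `S_y` iff `lᵀ M_y l = 0`, and `⟨l⟩ ↦ ⟨l²⟩` is injective
on projective points, so we must show that the ternary form `lᵀ M_y l` has `q + 1` projective
zeros, i.e. `q²` affine ones.

If `M_y` has rank one, or the characteristic is two, the form is `c • L²` for a nonzero linear
form `L` (in characteristic two it is `(∑ √yᵢᵢ lᵢ)²`, and the diagonal of `M_y` cannot vanish,
since a symmetric matrix with zero diagonal is then alternating, hence singular), so its zeros
form a plane. Otherwise `M_y` is nondegenerate in odd characteristic and the form diagonalises
to `a x² + b y² + c z²`. The number of solutions of `b u² + c w² = t` is the same for all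
`t ≠ 0`, so the substitution `t = -a x²` does not change the total, which is then `q²`.
-/

open Matrix

open scoped LinearAlgebra.Projectivization

theorem Projectivization.card_subtype' {K V : Type*} [DivisionRing K] [AddCommGroup V]
    [Module K V] [Finite V] (P : V → Prop) (hP : ∀ (c : Kˣ) v, P (c • v) ↔ P v) (hP0 : P 0) :
    Nat.card {v // P v} = Nat.card {p : ℙ K V // P p.rep} * (Nat.card K - 1) + 1 := by
  have hne : Nat.card {v : V // v ≠ 0 ∧ P v} =
      Nat.card {p : ℙ K V // P p.rep} * (Nat.card K - 1) :=
    calc Nat.card {v : V // v ≠ 0 ∧ P v}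
        = Nat.card {v : {v : V // v ≠ 0} // P v} :=
          Nat.card_congr (Equiv.subtypeSubtypeEquivSubtypeInter _ _).symm
      _ = Nat.card {x : ℙ K V × Kˣ // P x.1.rep} := by
          refine Nat.card_congr ((nonZeroEquivProjectivizationProdUnits K V).subtypeEquiv
            fun v => ?_)
          obtain ⟨c, hc⟩ := exists_smul_eq_mk_rep K v.1 v.2
          exact (hc ▸ hP c v).symm
      _ = Nat.card {p : ℙ K V // P p.rep} * (Nat.card K - 1) := by
          rw [Nat.card_congr (Equiv.prodSubtypeFstEquivSubtypeProd (p := fun p : ℙ K V => P p.rep)),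
            Nat.card_prod, Nat.card_units]
  have hzero := Set.ncard_sdiff_singleton_add_one (s := {v | P v}) hP0
  rw [← Nat.card_coe_set_eq, ← Nat.card_coe_set_eq] at hzero
  refine hzero.symm.trans ?_
  rw [← hne]
  exact congrArg (· + 1) (Nat.card_congr (Equiv.subtypeEquivRight fun v => and_comm))

theorem exists_eq_smul_of_mul_eq_mul {ι K : Type*} [Field K] {l m : ι → K} (hl : l ≠ 0)
    (h : ∀ i j, l i * m j = l j * m i) : ∃ t : K, m = t • l := by
  obtain ⟨i, hi⟩ := Function.ne_iff.mp hl
  refine ⟨m i / l i, funext fun j => ?_⟩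
  rw [Pi.smul_apply, smul_eq_mul, div_mul_eq_mul_div, eq_div_iff hi]
  linear_combination h i j

namespace Matrix

variable {K : Type*} [Field K]

theorem rank_lt_card_of_det_eq_zero {n : Type*} [Fintype n] [DecidableEq n] {A : Matrix n n K}
    (h : A.det = 0) : A.rank < Fintype.card n := by
  refine A.rank_le_card_width.lt_of_ne fun hr => ?_
  have hsurj : Function.Surjective A.mulVec := by
    rw [← coe_mulVecLin, ← LinearMap.range_eq_top]
    apply Submodule.eq_top_of_finrank_eq
    rw [Module.finrank_fintype_fun_eq_card]
    exact hr
  exact (A.isUnit_iff_isUnit_det.mp (mulVec_surjective_iff_isUnit.mp hsurj)).ne_zero h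

theorem minor_eq_zero_of_rank_le_one {m n : Type*} [Fintype n] {A : Matrix m n K}
    (h : A.rank ≤ 1) (i k : m) (j l : n) : A i j * A k l - A i l * A k j = 0 := by
  by_contra hne
  have h2 : (A.submatrix ![i, k] ![j, l]).rank = 2 := by
    rw [rank_of_det_ne_zero, Fintype.card_fin]
    rw [det_fin_two]
    simpa using hne
  have := A.rank_submatrix_le ![i, k] ![j, l]
  omega

theorem IsSymm.exists_eq_smul_vecMulVec_of_rank_le_one {n : Type*} [Fintype n]
    {A : Matrix n n K} (hA : A.IsSymm) (h0 : A ≠ 0) (h : A.rank ≤ 1) :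
    ∃ (c : K) (u : n → K), c ≠ 0 ∧ u ≠ 0 ∧ A = c • vecMulVec u u := by
  have hminor := minor_eq_zero_of_rank_le_one h
  obtain ⟨k, hk⟩ : ∃ k, A k k ≠ 0 := by
    by_contra! hdiag
    apply h0
    ext i j
    have hij := hminor i j j i
    rw [hdiag i, hA.apply i j, zero_mul, sub_zero] at hij
    exact mul_self_eq_zero.mp hij
  refine ⟨(A k k)⁻¹, fun i => A i k, inv_ne_zero hk, fun hu => hk (congrFun hu k), ?_⟩
  ext i j
  rw [smul_apply, vecMulVec_apply, smul_eq_mul, eq_inv_mul_iff_mul_eq₀ hk, ← hA.apply j k]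
  linear_combination hminor i k j k

theorem dotProduct_smul_vecMulVec_mulVec {n : Type*} [Fintype n] (c : K) (u v : n → K) :
    v ⬝ᵥ (c • vecMulVec u u) *ᵥ v = c * (u ⬝ᵥ v) ^ 2 := by
  rw [smul_mulVec, vecMulVec_mulVec, dotProduct_smul, dotProduct_smul, dotProduct_comm]
  simp [sq]

end Matrix

namespace FiniteField

variable {F : Type*} [Field F] [Fintype F]

theorem natCard_dotProduct_eq_zero {n : Type*} [Fintype n] [DecidableEq n] {u : n → F}
    (hu : u ≠ 0) : Nat.card {v : n → F // u ⬝ᵥ v = 0} = Fintype.card F ^ (Fintype.card n - 1) := by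
  classical
  let f := dotProductEquiv F n u
  have hrank := Module.Dual.finrank_ker_add_one_of_ne_zero
    ((LinearEquiv.map_ne_zero_iff _).mpr hu : f ≠ 0)
  rw [Module.finrank_fintype_fun_eq_card] at hrank
  calc Nat.card {v : n → F // u ⬝ᵥ v = 0} = Nat.card (LinearMap.ker f) := rfl
    _ = Fintype.card F ^ (Fintype.card n - 1) := by
      rw [Nat.card_eq_fintype_card, Module.card_eq_pow_finrank (K := F), ← hrank,
        Nat.add_sub_cancel]

theorem natCard_eq_zero_of_eq_mul_sq {n : Type*} [Fintype n] [DecidableEq n]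
    {Q : (n → F) → F} {c : F} {u : n → F} (hc : c ≠ 0) (hu : u ≠ 0)
    (hQ : ∀ v, Q v = c * (u ⬝ᵥ v) ^ 2) :
    Nat.card {v // Q v = 0} = Fintype.card F ^ (Fintype.card n - 1) := by
  rw [← natCard_dotProduct_eq_zero hu]
  exact Nat.card_congr (Equiv.subtypeEquivRight fun v => by simp [hQ, hc])

theorem exists_mul_sq_add_mul_sq_eq (hF : ringChar F ≠ 2) {a b : F} (ha : a ≠ 0) (hb : b ≠ 0)
    (r : F) : ∃ x y : F, a * x ^ 2 + b * y ^ 2 = r := by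
  open Polynomial in
  have hf : (C a * X ^ 2 : F[X]).degree = 2 := degree_C_mul_X_pow 2 ha
  have hg : (C b * X ^ 2 - C r : F[X]).degree = 2 := by compute_degree!
  obtain ⟨x, y, hxy⟩ := exists_root_sum_quadratic hf hg (odd_card_of_char_ne_two hF)
  simp only [eval_mul, eval_C, eval_pow, eval_X, eval_sub] at hxy
  exact ⟨x, y, by linear_combination hxy⟩

theorem natCard_mul_sq_add_mul_sq_eq_of_ne_zero (hF : ringChar F ≠ 2) {a b t t' : F}
    (ha : a ≠ 0) (hb : b ≠ 0) (ht : t ≠ 0) (ht' : t' ≠ 0) :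
    Nat.card {p : F × F // a * p.1 ^ 2 + b * p.2 ^ 2 = t} =
      Nat.card {p : F × F // a * p.1 ^ 2 + b * p.2 ^ 2 = t'} := by
  obtain ⟨r, s, hrs⟩ := exists_mul_sq_add_mul_sq_eq hF ha hb (a * t' / t)
  have hdet : r ^ 2 + b / a * s ^ 2 = t' / t := by
    field_simp at hrs ⊢
    linear_combination hrs
  -- multiplication by `r + s √(-b/a)`, an element of norm `t' / t`
  let φ (p : F × F) : F × F := (r * p.1 - b / a * s * p.2, s * p.1 + r * p.2)
  have hφ (p : F × F) :
      a * (φ p).1 ^ 2 + b * (φ p).2 ^ 2 = t' / t * (a * p.1 ^ 2 + b * p.2 ^ 2) := by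
    simp only [φ, ← hdet]
    field_simp
    ring
  have hinj : Function.Injective φ := by
    intro p p' h
    simp only [φ, Prod.ext_iff] at h
    have hz : t' / t * (p.1 - p'.1) = 0 ∧ t' / t * (p.2 - p'.2) = 0 := by
      rw [← hdet]
      constructor
      · linear_combination r * h.1 + b / a * s * h.2
      · linear_combination r * h.2 - s * h.1
    simp only [mul_eq_zero, div_eq_zero_iff, ht, ht', sub_eq_zero, false_or] at hz
    exact Prod.ext hz.1 hz.2
  refine Nat.card_congr ((Equiv.ofBijective φ (Finite.injective_iff_bijective.mp hinj)).subtypeEquiv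
    fun p => ?_)
  rw [Equiv.ofBijective_apply, hφ, ← mul_right_inj' (div_ne_zero ht' ht), div_mul_cancel₀ t' ht]

theorem natCard_mul_sq_add_mul_sq_add_mul_sq_eq_zero (hF : ringChar F ≠ 2) {a b c : F}
    (ha : a ≠ 0) (hb : b ≠ 0) (hc : c ≠ 0) :
    Nat.card {v : Fin 3 → F // a * v 0 ^ 2 + b * v 1 ^ 2 + c * v 2 ^ 2 = 0} =
      Fintype.card F ^ 2 := by
  let N (t : F) := Nat.card {p : F × F // b * p.1 ^ 2 + c * p.2 ^ 2 = t}
  let e : (Fin 3 → F) ≃ F × F × F :=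
    { toFun v := (v 0, v 1, v 2)
      invFun p := ![p.1, p.2.1, p.2.2]
      left_inv v := by ext i; fin_cases i <;> rfl
      right_inv _ := rfl }
  have hfib : Nat.card {v : Fin 3 → F // a * v 0 ^ 2 + b * v 1 ^ 2 + c * v 2 ^ 2 = 0} =
      ∑ z, N (-(a * z ^ 2)) := by
    rw [← Nat.card_sigma]
    refine Nat.card_congr ((e.subtypeEquiv fun v => ?_).trans
      (Equiv.subtypeProdEquivSigmaSubtype
        fun z (p : F × F) => b * p.1 ^ 2 + c * p.2 ^ 2 = -(a * z ^ 2)))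
    simp only [e]
    constructor <;> intro h <;> linear_combination h
  have hN (z : F) : N (-(a * z ^ 2)) = N z := by
    rcases eq_or_ne z 0 with rfl | hz
    · simp
    · exact natCard_mul_sq_add_mul_sq_eq_of_ne_zero hF hb hc (by simp [ha, hz]) hz
  calc _ = ∑ z, N z := by rw [hfib]; exact Finset.sum_congr rfl fun z _ => hN z
    _ = Nat.card (F × F) := by
      rw [← Nat.card_sigma]
      exact Nat.card_congr (Equiv.sigmaFiberEquiv _)
    _ = Fintype.card F ^ 2 := by rw [Nat.card_prod, Nat.card_eq_fintype_card, sq]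

theorem natCard_dotProduct_mulVec_self_eq_zero_of_det_ne_zero (hF : ringChar F ≠ 2)
    {A : Matrix (Fin 3) (Fin 3) F} (hA : A.IsSymm) (hdet : A.det ≠ 0) :
    Nat.card {v // v ⬝ᵥ A *ᵥ v = 0} = Fintype.card F ^ 2 := by
  let _ : Invertible (2 : F) := invertibleOfNonzero (Ring.two_ne_zero hF)
  have hassoc : QuadraticMap.associated A.toQuadraticForm' = toLinearMap₂' F A :=
    QuadraticMap.associated_left_inverse _ fun x y => by
      rw [toLinearMap₂'_apply', toLinearMap₂'_apply', dotProduct_mulVec x, ← mulVec_transpose,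
        hA.eq, dotProduct_comm]
  have hsep : (QuadraticMap.associated A.toQuadraticForm').SeparatingLeft := by
    rw [hassoc, separatingLeft_toLinearMap₂'_iff]
    exact (nondegenerate_of_det_ne_zero hdet).separatingLeft
  obtain ⟨w, ⟨e⟩⟩ := A.toQuadraticForm'.equivalent_weightedSumSquares_units_of_nondegenerate' hsep
  revert w
  rw [Module.finrank_fin_fun]
  intro w e
  rw [← natCard_mul_sq_add_mul_sq_add_mul_sq_eq_zero hF (w 0).ne_zero (w 1).ne_zero
    (w 2).ne_zero]
  refine Nat.card_congr (e.toEquiv.subtypeEquiv fun v => ?_)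
  have hv : v ⬝ᵥ A *ᵥ v = QuadraticMap.weightedSumSquares F w (e v) := by
    rw [e.map_app, toQuadraticForm', LinearMap.BilinMap.toQuadraticMap_apply,
      toLinearMap₂'_apply']
  rw [hv, QuadraticMap.weightedSumSquares_apply, Fin.sum_univ_three]
  simp only [Units.smul_def, smul_eq_mul, sq]
  rfl

end FiniteField

namespace Conics

section Veronese

variable {F : Type} [Field F]

theorem mulLin_smul_smul (s t : F) (b c : Fin 3 → F) :
    mulLin (s • b) (t • c) = (s * t) • mulLin b c := by
  ext k; fin_cases k <;>
    simp only [mulLin, Pi.smul_apply, smul_eq_mul, Fin.zero_eta, Fin.mk_one, Fin.reduceFinMk,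
      cons_val_zero, cons_val_one, cons_val] <;>
    ring

theorem mulLin_self_ne_zero {l : Fin 3 → F} (hl : l ≠ 0) : mulLin l l ≠ 0 := by
  intro h
  apply hl
  ext i
  fin_cases i
  exacts [mul_self_eq_zero.mp (congrFun h 0), mul_self_eq_zero.mp (congrFun h 3),
    mul_self_eq_zero.mp (congrFun h 5)]

def evalForm (a : Fin 6 → F) (x : Fin 3 → F) : F :=
  a 0 * x 0 ^ 2 + a 1 * x 0 * x 1 + a 2 * x 0 * x 2 + a 3 * x 1 ^ 2 + a 4 * x 1 * x 2 +
    a 5 * x 2 ^ 2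

theorem evalForm_mulLin (b c x : Fin 3 → F) : evalForm (mulLin b c) x = (b ⬝ᵥ x) * (c ⬝ᵥ x) := by
  simp only [evalForm, mulLin, cons_val_zero, cons_val_one, cons_val, dotProduct,
    Fin.sum_univ_three]
  ring

theorem evalForm_smul (c : F) (a : Fin 6 → F) (x : Fin 3 → F) :
    evalForm (c • a) x = c * evalForm a x := by
  simp only [evalForm, Pi.smul_apply, smul_eq_mul]
  ring

theorem exists_eq_smul_of_mulLin_self_eq_smul {l m : Fin 3 → F} {c : F} (hl : l ≠ 0)
    (h : mulLin m m = c • mulLin l l) : ∃ t : F, m = t • l := by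
  refine exists_eq_smul_of_mul_eq_mul hl fun i j => ?_
  -- `(m ⬝ᵥ x)² = c (l ⬝ᵥ x)²` for all `x`; test it on an `x` killed by `l`
  set x : Fin 3 → F := l i • Pi.single j 1 - l j • Pi.single i 1
  have hlx : l ⬝ᵥ x = 0 := by simp [x, mul_comm]
  have hmx : m ⬝ᵥ x = l i * m j - l j * m i := by simp [x]
  have h' := congrArg (evalForm · x) h
  simp only [evalForm_smul, evalForm_mulLin, hlx, hmx, mul_zero] at h'
  linear_combination mul_self_eq_zero.mp h'

theorem numConics_isDoubleLine (W : Submodule F (Fin 6 → F)) :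
    numConics W IsDoubleLine = Nat.card {p : ℙ F (Fin 3 → F) // mulLin p.rep p.rep ∈ W} := by
  let veronese (p : {p : ℙ F (Fin 3 → F) // mulLin p.rep p.rep ∈ W}) :
      Submodule F (Fin 6 → F) :=
    Submodule.span F {mulLin p.1.rep p.1.rep}
  have hinj : Function.Injective veronese := by
    intro ⟨p, _⟩ ⟨p', _⟩ h
    have hmem : mulLin p.rep p.rep ∈ Submodule.span F {mulLin p'.rep p'.rep} :=
      h.le (Submodule.mem_span_singleton_self _)
    obtain ⟨c, hc⟩ := Submodule.mem_span_singleton.mp hmem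
    obtain ⟨t, ht⟩ := exists_eq_smul_of_mulLin_self_eq_smul p'.rep_nonzero hc.symm
    have ht0 : t ≠ 0 := by rintro rfl; exact p.rep_nonzero (by simpa using ht)
    rw [Subtype.mk.injEq, ← p.mk_rep, ← p'.mk_rep, Projectivization.mk_eq_mk_iff']
    exact ⟨Units.mk0 t ht0, ht.symm⟩
  rw [numConics, ← Set.ncard_range_of_injective hinj]
  congr 1
  ext P
  constructor
  · rintro ⟨a, -, haW, ⟨c, l, hc, hl, rfl⟩, rfl⟩
    obtain ⟨s, hs⟩ := Projectivization.exists_smul_eq_mk_rep F l hl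
    have hrep : mulLin (Projectivization.mk F l hl).rep (Projectivization.mk F l hl).rep =
        ((s * s : Fˣ) : F) • mulLin l l := by
      rw [← hs, Units.smul_def, mulLin_smul_smul, Units.val_mul]
    refine ⟨⟨Projectivization.mk F l hl, ?_⟩, ?_⟩
    · rw [hrep]
      exact W.smul_mem _ ((W.smul_mem_iff hc).mp haW)
    · simp only [veronese, hrep]
      rw [Submodule.span_singleton_smul_eq (s * s).isUnit,
        Submodule.span_singleton_smul_eq (IsUnit.mk0 c hc)]
  · rintro ⟨⟨p, hp⟩, rfl⟩
    exact ⟨_, mulLin_self_ne_zero p.rep_nonzero, hp,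
      ⟨1, p.rep, one_ne_zero, p.rep_nonzero, (one_smul _ _).symm⟩, rfl⟩

end Veronese

section Squab

variable {F : Type} [Field F]

theorem isSymm_M (y : Fin 6 → F) : (M y).IsSymm := by
  ext i j; fin_cases i <;> fin_cases j <;> rfl

theorem M_ne_zero {y : Fin 6 → F} (hy : y ≠ 0) : M y ≠ 0 := by
  intro h
  apply hy
  ext k
  fin_cases k
  exacts [congrFun₂ h 0 0, congrFun₂ h 0 1, congrFun₂ h 0 2, congrFun₂ h 1 1, congrFun₂ h 1 2,
    congrFun₂ h 2 2]

theorem mulLin_self_mem_squab_iff (y : Fin 6 → F) (v : Fin 3 → F) :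
    mulLin v v ∈ squab y ↔ v ⬝ᵥ M y *ᵥ v = 0 := by
  change Bform (mulLin v v) y = 0 ↔ _
  rw [show Bform (mulLin v v) y = v ⬝ᵥ M y *ᵥ v by
    simp only [Bform, mulLin, M, dotProduct, mulVec, of_apply, cons_val', cons_val_zero,
      cons_val_one, cons_val, cons_val_fin_one, Fin.sum_univ_three]
    ring]

variable [Fintype F]

theorem exists_dotProduct_M_mulVec_eq_sq (hF : ringChar F = 2) {y : Fin 6 → F}
    (hdet : (M y).det ≠ 0) : ∃ u : Fin 3 → F, u ≠ 0 ∧ ∀ v, v ⬝ᵥ M y *ᵥ v = (u ⬝ᵥ v) ^ 2 := by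
  have h2 : (2 : F) = 0 := by simpa [hF] using ringChar.Nat.cast_ringChar (R := F)
  obtain ⟨s0, hs0⟩ := FiniteField.isSquare_of_char_two hF (y 0)
  obtain ⟨s1, hs1⟩ := FiniteField.isSquare_of_char_two hF (y 3)
  obtain ⟨s2, hs2⟩ := FiniteField.isSquare_of_char_two hF (y 5)
  refine ⟨![s0, s1, s2], fun hs => hdet ?_, fun v => ?_⟩
  · have hs0' : s0 = 0 := congrFun hs 0
    have hs1' : s1 = 0 := congrFun hs 1
    have hs2' : s2 = 0 := congrFun hs 2
    simp only [M, det_fin_three, of_apply, cons_val', cons_val_zero, cons_val_one, cons_val,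
      cons_val_fin_one, hs0, hs1, hs2, hs0', hs1', hs2', mul_zero, zero_mul, sub_self, zero_add,
      sub_zero]
    linear_combination y 1 * y 2 * y 4 * h2
  · simp only [dotProduct, mulVec, M, of_apply, cons_val', cons_val_fin_one, Fin.sum_univ_three,
      cons_val_zero, cons_val_one, cons_val]
    linear_combination v 0 ^ 2 * hs0 + v 1 ^ 2 * hs1 + v 2 ^ 2 * hs2 +
      (y 1 * v 0 * v 1 + y 2 * v 0 * v 2 + y 4 * v 1 * v 2 - s0 * s1 * v 0 * v 1 -
        s0 * s2 * v 0 * v 2 - s1 * s2 * v 1 * v 2) * h2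

theorem natCard_dotProduct_M_mulVec_eq_zero {y : Fin 6 → F} (hy : y ≠ 0)
    (hrk : (M y).rank ≠ 2) :
    Nat.card {v : Fin 3 → F // v ⬝ᵥ M y *ᵥ v = 0} = Fintype.card F ^ 2 := by
  by_cases hdet : (M y).det = 0
  · have hrk1 : (M y).rank ≤ 1 := by
      have := rank_lt_card_of_det_eq_zero hdet
      rw [Fintype.card_fin] at this
      omega
    obtain ⟨c, u, hc, hu, hM⟩ := (isSymm_M y).exists_eq_smul_vecMulVec_of_rank_le_one
      (M_ne_zero hy) hrk1
    exact FiniteField.natCard_eq_zero_of_eq_mul_sq hc hu fun v =>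
      hM ▸ dotProduct_smul_vecMulVec_mulVec c u v
  by_cases hF : ringChar F = 2
  · obtain ⟨u, hu, hQ⟩ := exists_dotProduct_M_mulVec_eq_sq hF hdet
    exact FiniteField.natCard_eq_zero_of_eq_mul_sq one_ne_zero hu fun v =>
      (hQ v).trans (one_mul _).symm
  · exact FiniteField.natCard_dotProduct_mulVec_self_eq_zero_of_det_ne_zero hF (isSymm_M y) hdet

end Squab

/-- every squab not of rank two contains exactly `q + 1` double lines. -/
theorem squab_not_rank_two_double_lines (F : Type) [Field F] [Fintype F] (q : ℕ)
    (hq : Fintype.card F = q) (y : Fin 6 → F) (hy : y ≠ 0) (hrk : (M y).rank ≠ 2) :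
    numConics (squab y) IsDoubleLine = q + 1 := by
  subst hq
  have hzeros := natCard_dotProduct_M_mulVec_eq_zero hy hrk
  rw [Projectivization.card_subtype' (K := F) _ (fun c v => by
    simp [Units.smul_def, mulVec_smul]) (by simp), Nat.card_eq_fintype_card (α := F)] at hzeros
  rw [numConics_isDoubleLine]
  simp_rw [mulLin_self_mem_squab_iff]
  obtain ⟨m, hm⟩ : ∃ m, Fintype.card F = m + 1 := ⟨_, (Nat.sub_add_cancel Fintype.card_pos).symm⟩
  have hm0 : 0 < m := by have := Fintype.one_lt_card (α := F); omega
  rw [hm, Nat.add_sub_cancel] at hzeros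
  rw [hm]
  exact Nat.eq_of_mul_eq_mul_right hm0 (by linarith)

end Conics
end
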